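/- Let (∂: E → G, ▷) be a crossed module of finite groups, and consider the action of the group T = E ⋊ G on the set E ×̂ E = {(e,f) ∈ E × E : ∂(e) = ∂(f)} given by (a,g)·(e,f) = (a·(g▷e), a·(g▷f)). Then two elements (e,f) and (e',f') lie in the same T-orbit if and only if e⁻¹f and e'⁻¹f' lie in the same orbit of the G-action ▷ on ker(∂). -/
import Mathlib


theorem two_flux_orbit_classification {E G : Type*} [Group E] [Group G]
    [Fintype E] [Fintype G]
    (d : E →* G) (φ : G →* MulAut E)
    (pf1 : ∀ (g : G) (e : E), d (φ g e) = g * d e * g⁻¹)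
    (pf2 : ∀ e e' : E, φ (d e) e' = e * e' * e⁻¹)
    (e f e' f' : E) (hef : d e = d f) (hef' : d e' = d f') :
    (∃ p : E ⋊[φ] G, (p.left * φ p.right e, p.left * φ p.right f) = (e', f'))
      ↔ (∃ g : G, φ g (e⁻¹ * f) = e'⁻¹ * f') := by
  constructor
  · rintro ⟨p, hp⟩
    rw [Prod.mk.injEq] at hp
    obtain ⟨h1, h2⟩ := hp
    refine ⟨p.right, ?_⟩
    rw [map_mul, map_inv, ← h1, ← h2]
    group
  · rintro ⟨g, hg⟩
    refine ⟨⟨e' * (φ g e)⁻¹, g⟩, ?_⟩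
    rw [Prod.mk.injEq]
    constructor
    · simp
    · have : φ g f = φ g e * φ g (e⁻¹ * f) := by
        rw [← map_mul]; group
      rw [this, hg]; group
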